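/- arXiv:1511.05226 — 2 statements merged into one kernel-verified Lean document; each statement's English description precedes it below -/
import Mathlib

section
/- In a bi-involutive tensor category, the unitary j : 1 → \overline{1} is determined by the remaining data via j = λ_{\overline 1} ∘ (φ_1^{-1} ⊗ id_{\overline 1}) ∘ ν_{\overline{1},1}^{-1} ∘ \overline{λ_{\overline 1}}^{-1} ∘ φ_1. -/
open CategoryTheory MonoidalCategory

/-!
At `x = \overline 1` the unit axiom `ν_{x,1} ∘ (id ⊗ j) ∘ ρ⁻¹ = \overline{λ_x}⁻¹` turns
`ν⁻¹ ∘ \overline{λ}⁻¹` into `(id ⊗ j) ∘ ρ⁻¹`. What remains is `j` conjugated by `φ_1` through the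
unitors, and that is `j` again because whiskering on opposite sides commutes and `λ_1 = ρ_1`.
-/

/-- The conjugation data of a bi-involutive tensor category: a (covariant, in the linear
setting antilinear) conjugation functor `conj` together with unitary coherence
isomorphisms `φ : X ≅ conj (conj X)`, `ν : conj X ⊗ conj Y ≅ conj (Y ⊗ X)` and
`j : 𝟙 ≅ conj 𝟙`, satisfying the bi-involutive coherence axioms (with the structural
associators and unitors inserted where needed). -/
structure BiInvolutive (C : Type*) [Category C] [MonoidalCategory C] where
  conj : C ⥤ C
  φ : ∀ X : C, X ≅ conj.obj (conj.obj X)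
  ν : ∀ X Y : C, conj.obj X ⊗ conj.obj Y ≅ conj.obj (Y ⊗ X)
  j : 𝟙_ C ≅ conj.obj (𝟙_ C)
  nu_assoc : ∀ X Y Z : C,
    (𝟙 (conj.obj X) ⊗ₘ (ν Y Z).hom) ≫ (ν X (Z ⊗ Y)).hom ≫ conj.map (α_ Z Y X).hom
      = (α_ (conj.obj X) (conj.obj Y) (conj.obj Z)).inv
        ≫ ((ν X Y).hom ⊗ₘ 𝟙 (conj.obj Z)) ≫ (ν (Y ⊗ X) Z).hom
  nu_j_left : ∀ X : C,
    (λ_ (conj.obj X)).inv ≫ (j.hom ⊗ₘ 𝟙 (conj.obj X)) ≫ (ν (𝟙_ C) X).hom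
      = conj.map (ρ_ X).inv
  nu_j_right : ∀ X : C,
    (ρ_ (conj.obj X)).inv ≫ (𝟙 (conj.obj X) ⊗ₘ j.hom) ≫ (ν X (𝟙_ C)).hom
      = conj.map (λ_ X).inv
  phi_one : (φ (𝟙_ C)).hom = j.hom ≫ conj.map j.hom
  phi_tensor : ∀ X Y : C,
    (φ (X ⊗ Y)).hom
      = ((φ X).hom ⊗ₘ (φ Y).hom) ≫ (ν (conj.obj X) (conj.obj Y)).hom ≫ conj.map (ν Y X).hom
  phi_conj : ∀ X : C, (φ (conj.obj X)).hom = conj.map (φ X).hom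

lemma CategoryTheory.MonoidalCategory.hom_eq_rightUnitor_inv_whiskerLeft_whiskerRight_leftUnitor
    {C : Type*} [Category C] [MonoidalCategory C] {Y Z : C} (f : 𝟙_ C ≅ Y) (g : 𝟙_ C ⟶ Z) :
    g = f.hom ≫ (ρ_ Y).inv ≫ (Y ◁ g) ≫ (f.inv ▷ Z) ≫ (λ_ Z).hom := by
  rw [rightUnitor_inv_naturality_assoc, whisker_exchange_assoc, ← comp_whiskerRight_assoc,
    Iso.hom_inv_id, id_whiskerRight, Category.id_comp, leftUnitor_naturality,
    unitors_equal, Iso.inv_hom_id_assoc]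

namespace BiInvolutive

variable {C : Type*} [Category C] [MonoidalCategory C] (B : BiInvolutive C)

lemma conj_map_leftUnitor_inv_comp_nu_inv (X : C) :
    B.conj.map (λ_ X).inv ≫ (B.ν X (𝟙_ C)).inv
      = (ρ_ (B.conj.obj X)).inv ≫ (B.conj.obj X ◁ B.j.hom) := by
  rw [← B.nu_j_right, id_tensorHom, Category.assoc, Category.assoc, Iso.hom_inv_id,
    Category.comp_id]

end BiInvolutive

/-- In a bi-involutive tensor category, the unitary `j : 1 → \overline{1}` is determined
by the remaining data via
`j = λ_{\overline 1} ∘ (φ_1⁻¹ ⊗ id) ∘ ν_{\overline 1, 1}⁻¹ ∘ \overline{λ_{\overline 1}}⁻¹ ∘ φ_1`. -/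
theorem stmt6 {C : Type*} [Category C] [MonoidalCategory C] (B : BiInvolutive C) :
    B.j.hom
      = (B.φ (𝟙_ C)).hom
        ≫ B.conj.map (λ_ (B.conj.obj (𝟙_ C))).inv
        ≫ (B.ν (B.conj.obj (𝟙_ C)) (𝟙_ C)).inv
        ≫ ((B.φ (𝟙_ C)).inv ⊗ₘ 𝟙 (B.conj.obj (𝟙_ C)))
        ≫ (λ_ (B.conj.obj (𝟙_ C))).hom := by
  rw [reassoc_of% B.conj_map_leftUnitor_inv_comp_nu_inv, tensorHom_id]
  exact hom_eq_rightUnitor_inv_whiskerLeft_whiskerRight_leftUnitor (B.φ (𝟙_ C)) B.j.hom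
end

section
/- Let C be a tensor category with no zero-divisors, equipped with a conjugation (anti-monoidal involution on objects). Then: (a) any right absorbing object is absorbing; (b) any absorbing object X satisfies X ⊕ X ≅ X; (c) any two absorbing objects are isomorphic; (d) an absorbing object is isomorphic to its conjugate. -/
open CategoryTheory MonoidalCategory Limits

/-- A nonzero object `X` is right absorbing if `X ⊗ Y ≅ X` for every nonzero `Y`. -/
def RightAbsorbing {C : Type*} [Category C] [MonoidalCategory C] (X : C) : Prop :=
  ¬ IsZero X ∧ ∀ Y : C, ¬ IsZero Y → Nonempty (X ⊗ Y ≅ X)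

/-- A nonzero object `X` is left absorbing if `Y ⊗ X ≅ X` for every nonzero `Y`. -/
def LeftAbsorbing {C : Type*} [Category C] [MonoidalCategory C] (X : C) : Prop :=
  ¬ IsZero X ∧ ∀ Y : C, ¬ IsZero Y → Nonempty (Y ⊗ X ≅ X)

/-- An object is absorbing if it is both right and left absorbing. -/
def Absorbing {C : Type*} [Category C] [MonoidalCategory C] (X : C) : Prop :=
  RightAbsorbing X ∧ LeftAbsorbing X

/-!
A right absorbing `X` and a left absorbing `Y` are isomorphic, via `X ≅ X ⊗ Y ≅ Y`. Since the
conjugation reverses tensor products, the conjugate of a right absorbing object is left absorbing;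
hence a right absorbing object is isomorphic to its conjugate, and so is itself left absorbing.
Finally `X ⊞ X ≅ X ⊗ (𝟙 ⊞ 𝟙) ≅ X`, because the tensor product is additive and `𝟙 ⊞ 𝟙 ≠ 0`.
-/

section

variable {C : Type*} [Category C] [MonoidalCategory C]

theorem LeftAbsorbing.of_iso {X Y : C} (e : X ≅ Y) (hX : LeftAbsorbing X) : LeftAbsorbing Y :=
  ⟨fun h => hX.1 (h.of_iso e), fun Z hZ =>
    hX.2 Z hZ |>.map fun f => whiskerLeftIso Z e.symm ≪≫ f ≪≫ e⟩

theorem RightAbsorbing.nonempty_iso_of_leftAbsorbing {X Y : C} (hX : RightAbsorbing X)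
    (hY : LeftAbsorbing Y) : Nonempty (X ≅ Y) := by
  obtain ⟨eX⟩ := hX.2 Y hY.1
  obtain ⟨eY⟩ := hY.2 X hX.1
  exact ⟨eX.symm ≪≫ eY⟩

theorem RightAbsorbing.leftAbsorbing {X Y : C} (hX : RightAbsorbing X) (hY : LeftAbsorbing Y) :
    LeftAbsorbing X :=
  let ⟨e⟩ := hX.nonempty_iso_of_leftAbsorbing hY
  hY.of_iso e.symm

theorem RightAbsorbing.leftAbsorbing_obj_of_antimonoidal (F : C ⥤ C)
    (hF_tensor : ∀ X Y : C, Nonempty (F.obj (X ⊗ Y) ≅ F.obj Y ⊗ F.obj X))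
    (hF_invol : ∀ X : C, Nonempty (F.obj (F.obj X) ≅ X))
    (hF_isZero : ∀ X : C, IsZero (F.obj X) → IsZero X) {X : C} (hX : RightAbsorbing X) :
    LeftAbsorbing (F.obj X) := by
  refine ⟨fun h => hX.1 (hF_isZero X h), fun Y hY => ?_⟩
  obtain ⟨e⟩ := hX.2 (F.obj Y) fun h => hY (hF_isZero Y h)
  obtain ⟨m⟩ := hF_tensor X (F.obj Y)
  obtain ⟨i⟩ := hF_invol Y
  exact ⟨(whiskerRightIso i (F.obj X)).symm ≪≫ m.symm ≪≫ F.mapIso e⟩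

section Preadditive

variable [Preadditive C] [MonoidalPreadditive C]

theorem not_isZero_tensorUnit {X : C} (hX : ¬ IsZero X) : ¬ IsZero (𝟙_ C) :=
  fun h => hX (((tensorRight X).map_isZero h).of_iso (λ_ X).symm)

theorem RightAbsorbing.nonempty_biprod_self_iso [HasBinaryBiproducts C] {X : C}
    (hX : RightAbsorbing X) : Nonempty (X ⊞ X ≅ X) := by
  have hunit : ¬ IsZero (𝟙_ C ⊞ 𝟙_ C) := by
    simpa only [biprod_isZero_iff, and_self] using not_isZero_tensorUnit hX.1
  obtain ⟨e⟩ := hX.2 _ hunit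
  have := preservesBinaryBiproducts_of_preservesBiproducts (tensorLeft X)
  exact ⟨biprod.mapIso (ρ_ X).symm (ρ_ X).symm ≪≫
    ((tensorLeft X).mapBiprod (𝟙_ C) (𝟙_ C)).symm ≪≫ e⟩

end Preadditive

end

theorem stmt9_general {C : Type*} [Category C] [MonoidalCategory C] [Preadditive C]
    [MonoidalPreadditive C] [HasBinaryBiproducts C]
    (conj : C ⥤ C)
    (hconj_mon : ∀ X Y : C, Nonempty (conj.obj (X ⊗ Y) ≅ conj.obj Y ⊗ conj.obj X))
    (hconj_inv : ∀ X : C, Nonempty (conj.obj (conj.obj X) ≅ X))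
    (hconj_zero : ∀ X : C, IsZero (conj.obj X) ↔ IsZero X) :
    (∀ X : C, RightAbsorbing X → Absorbing X)
    ∧ (∀ X : C, Absorbing X → Nonempty (X ⊞ X ≅ X))
    ∧ (∀ X Y : C, Absorbing X → Absorbing Y → Nonempty (X ≅ Y))
    ∧ (∀ X : C, Absorbing X → Nonempty (X ≅ conj.obj X)) := by
  have hconj {X : C} (hX : RightAbsorbing X) : LeftAbsorbing (conj.obj X) :=
    hX.leftAbsorbing_obj_of_antimonoidal conj hconj_mon hconj_inv fun Y => (hconj_zero Y).mp
  exact ⟨fun X hX => ⟨hX, hX.leftAbsorbing (hconj hX)⟩,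
    fun X hX => hX.1.nonempty_biprod_self_iso,
    fun X Y hX hY => hX.1.nonempty_iso_of_leftAbsorbing hY.2,
    fun X hX => hX.1.nonempty_iso_of_leftAbsorbing (hconj hX.1)⟩

/-- Let `C` be a tensor category (with direct sums and additive tensor product) with no
zero-divisors, equipped with a conjugation (anti-monoidal involution on objects).  Then:
(a) any right absorbing object is absorbing; (b) any absorbing object `X` satisfies
`X ⊕ X ≅ X`; (c) any two absorbing objects are isomorphic; (d) an absorbing object is
isomorphic to its conjugate. -/
theorem stmt9 {C : Type*} [Category C] [MonoidalCategory C] [Preadditive C]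
    [MonoidalPreadditive C] [HasBinaryBiproducts C]
    (hnzd_left : ∀ X : C, ¬ IsZero X →
      ∀ {Y₁ Y₂ : C} (f g : Y₁ ⟶ Y₂), 𝟙 X ⊗ₘ f = 𝟙 X ⊗ₘ g → f = g)
    (hnzd_right : ∀ X : C, ¬ IsZero X →
      ∀ {Y₁ Y₂ : C} (f g : Y₁ ⟶ Y₂), f ⊗ₘ 𝟙 X = g ⊗ₘ 𝟙 X → f = g)
    (conj : C ⥤ C)
    (hconj_mon : ∀ X Y : C, Nonempty (conj.obj (X ⊗ Y) ≅ conj.obj Y ⊗ conj.obj X))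
    (hconj_inv : ∀ X : C, Nonempty (conj.obj (conj.obj X) ≅ X))
    (hconj_zero : ∀ X : C, IsZero (conj.obj X) ↔ IsZero X) :
    (∀ X : C, RightAbsorbing X → Absorbing X)
    ∧ (∀ X : C, Absorbing X → Nonempty (X ⊞ X ≅ X))
    ∧ (∀ X Y : C, Absorbing X → Absorbing Y → Nonempty (X ≅ Y))
    ∧ (∀ X : C, Absorbing X → Nonempty (X ≅ conj.obj X)) :=
  stmt9_general conj hconj_mon hconj_inv hconj_zero
end
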